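/- Let α, β > 1 be real numbers, let f : [0,1] → [0,1] be the base-change-transformation (f(0) = 0, f(⟨d_i⟩_α) = ⟨d_i⟩_β), and let F = {(x, f(x)) : x ∈ [0,1]} ⊆ [0,1]² be its graph. For each positive integer i define the affine contraction G_i : [0,1]² → [0,1]² by G_i(x,y) = (((α−1)/α^i)x + 1/α^i, ((β−1)/β^i)y + 1/β^i). Then F is infinite self-affine, i.e., F = ⋃_{i=1}^∞ G_i(F) ∪ {(0,0)} (indeed ⋃_{i=1}^∞ G_i(F) = F ∖ {(0,0)} together with its closure point), and the Hausdorff dimension of F equals one. -/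

import Mathlib

open MeasureTheory

/-- The α-expansion value ⟨d_i⟩_α = ∑_{i=1}^∞ (α-1)^{i-1} α^{-(d_1+⋯+d_i)},
with the digit sequence `d : ℕ → ℕ` indexed from 0 (so `d 0` is the first digit). -/
noncomputable def alphaExpansion (α : ℝ) (d : ℕ → ℕ) : ℝ :=
  ∑' i : ℕ, (α - 1) ^ i * α ^ (-((∑ j ∈ Finset.range (i + 1), d j : ℕ) : ℤ))

/-- The affine contraction
G_i(x,y) = (((α−1)/α^i)x + 1/α^i, ((β−1)/β^i)y + 1/β^i). -/
noncomputable def affG (α β : ℝ) (i : ℕ) (p : ℝ × ℝ) : ℝ × ℝ :=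
  ((α - 1) / α ^ i * p.1 + 1 / α ^ i, (β - 1) / β ^ i * p.2 + 1 / β ^ i)

/-!
Every `x ∈ (0, 1]` has a greedy α-expansion, and for every base `a > 1` the value `⟨d⟩_a`
reverses the lexicographic order of digit sequences; hence `f` is monotone, and off the origin
its graph is the set of pairs `(⟨d⟩_α, ⟨d⟩_β)`. Prefixing a digit `n` acts on both coordinates
as `G_n`, which gives the self-affine decomposition. On the graph of a monotone function the map
`(x, y) ↦ x + y` does not contract distances, so the graph has dimension at most `dim ℝ = 1`,
and projecting to the first coordinate gives the reverse inequality.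
-/

open Set

/-- The coordinate maps of `affG`; `cylinderMap a n` prepends the digit `n` to an α-expansion. -/
noncomputable def cylinderMap (a : ℝ) (n : ℕ) (u : ℝ) : ℝ :=
  (a - 1) / a ^ n * u + 1 / a ^ n

section Expansion

variable {a : ℝ} {d : ℕ → ℕ}

lemma cylinderMap_strictMono (ha : 1 < a) (n : ℕ) : StrictMono (cylinderMap a n) :=
  fun u v huv ↦ by
  have : 0 < (a - 1) / a ^ n := div_pos (by linarith) (pow_pos (by linarith) n)
  unfold cylinderMap
  gcongr

lemma cylinderMap_sub (a : ℝ) (n : ℕ) (u v : ℝ) :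
    cylinderMap a n u - cylinderMap a n v = (a - 1) / a ^ n * (u - v) := by
  unfold cylinderMap; ring

lemma cylinderMap_succ_one (ha : 1 < a) (n : ℕ) :
    cylinderMap a (n + 1) 1 = cylinderMap a n 0 := by
  have : a ≠ 0 := by positivity
  unfold cylinderMap; field_simp; ring

lemma exists_cylinderMap_eq (ha : 1 < a) {x : ℝ} (hx : x ∈ Ioc 0 1) :
    ∃ n, 1 ≤ n ∧ ∃ y ∈ Ioc 0 1, x = cylinderMap a n y := by
  obtain ⟨m, hm, hm'⟩ := exists_nat_pow_near (one_le_inv_iff₀.2 hx) ha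
  have ha0 : 0 < a - 1 := by linarith
  have hpos : 0 < a ^ m := by positivity
  refine ⟨m + 1, by omega, (x * a ^ (m + 1) - 1) / (a - 1), ⟨?_, ?_⟩, ?_⟩
  · rw [inv_lt_iff_one_lt_mul₀ hx.1] at hm'
    exact div_pos (by linarith) ha0
  · have hxm : x * a ^ m ≤ 1 := calc
      x * a ^ m ≤ x * x⁻¹ := by gcongr; exact hx.1.le
      _ = 1 := mul_inv_cancel₀ hx.1.ne'
    rw [div_le_one ha0, pow_succ]
    nlinarith
  · unfold cylinderMap
    field_simp
    ring

lemma alphaExpansion_eq_tsum (a : ℝ) (d : ℕ → ℕ) :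
    alphaExpansion a d = ∑' i, (a - 1) ^ i / a ^ (∑ j ∈ Finset.range (i + 1), d j) := by
  simp only [alphaExpansion, zpow_neg, zpow_natCast, div_eq_mul_inv]

lemma alphaExpansion_term_le (ha : 1 < a) (hd : ∀ i, 1 ≤ d i) (i : ℕ) :
    (a - 1) ^ i / a ^ (∑ j ∈ Finset.range (i + 1), d j) ≤ ((a - 1) / a) ^ i / a := by
  have hsum : i + 1 ≤ ∑ j ∈ Finset.range (i + 1), d j := by
    simpa using Finset.card_nsmul_le_sum (Finset.range (i + 1)) d 1 fun j _ ↦ hd j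
  calc (a - 1) ^ i / a ^ (∑ j ∈ Finset.range (i + 1), d j) ≤ (a - 1) ^ i / a ^ (i + 1) :=
        div_le_div_of_nonneg_left (pow_nonneg (by linarith) i) (by positivity)
          (pow_le_pow_right₀ ha.le hsum)
    _ = ((a - 1) / a) ^ i / a := by rw [div_pow, pow_succ, div_div]

lemma hasSum_alphaExpansion_majorant (ha : 1 < a) : HasSum (fun i ↦ ((a - 1) / a) ^ i / a) 1 := by
  have h0 : a ≠ 0 := by positivity
  have hr : (a - 1) / a < 1 := (div_lt_one (by linarith)).2 (by linarith)
  have := (hasSum_geometric_of_lt_one (div_nonneg (by linarith) (by linarith)) hr).div_const a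
  rwa [show (1 - (a - 1) / a)⁻¹ / a = 1 by field_simp; ring] at this

lemma summable_alphaExpansion_term (ha : 1 < a) (hd : ∀ i, 1 ≤ d i) :
    Summable fun i ↦ (a - 1) ^ i / a ^ (∑ j ∈ Finset.range (i + 1), d j) :=
  (hasSum_alphaExpansion_majorant ha).summable.of_nonneg_of_le
    (fun i ↦ div_nonneg (pow_nonneg (by linarith) i) (by positivity))
    (alphaExpansion_term_le ha hd)

lemma alphaExpansion_pos (ha : 1 < a) (hd : ∀ i, 1 ≤ d i) : 0 < alphaExpansion a d := by
  rw [alphaExpansion_eq_tsum]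
  exact (summable_alphaExpansion_term ha hd).tsum_pos
    (fun i ↦ div_nonneg (pow_nonneg (by linarith) i) (by positivity)) 0 (by simp; positivity)

lemma alphaExpansion_le_one (ha : 1 < a) (hd : ∀ i, 1 ≤ d i) : alphaExpansion a d ≤ 1 := by
  rw [alphaExpansion_eq_tsum]
  exact hasSum_le (alphaExpansion_term_le ha hd) (summable_alphaExpansion_term ha hd).hasSum
    (hasSum_alphaExpansion_majorant ha)

lemma alphaExpansion_mem_Ioc (ha : 1 < a) (hd : ∀ i, 1 ≤ d i) :
    alphaExpansion a d ∈ Ioc 0 1 :=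
  ⟨alphaExpansion_pos ha hd, alphaExpansion_le_one ha hd⟩

lemma alphaExpansion_one (ha : 1 < a) : alphaExpansion a (fun _ ↦ 1) = 1 := by
  rw [alphaExpansion_eq_tsum]
  convert (hasSum_alphaExpansion_majorant ha).tsum_eq using 2 with i
  simp [div_pow, pow_succ, div_div]

lemma alphaExpansion_eq_cylinderMap (ha : 1 < a) (hd : ∀ i, 1 ≤ d i) :
    alphaExpansion a d = cylinderMap a (d 0) (alphaExpansion a fun i ↦ d (i + 1)) := by
  rw [alphaExpansion_eq_tsum, alphaExpansion_eq_tsum,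
    (summable_alphaExpansion_term ha hd).tsum_eq_zero_add, cylinderMap, ← tsum_mul_left, add_comm]
  congr 2 with i
  rw [Finset.sum_range_succ' _ (i + 1), pow_add, pow_succ]
  ring

lemma alphaExpansion_lt_of_head_lt (ha : 1 < a) {d e : ℕ → ℕ} (hd : ∀ i, 1 ≤ d i)
    (he : ∀ i, 1 ≤ e i) (h : e 0 < d 0) : alphaExpansion a d < alphaExpansion a e := by
  have hcyl_one : ∀ n, cylinderMap a n 1 = a / a ^ n := fun n ↦ by unfold cylinderMap; ring
  calc alphaExpansion a d
      ≤ cylinderMap a (d 0) 1 := by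
        rw [alphaExpansion_eq_cylinderMap ha hd]
        exact (cylinderMap_strictMono ha _).monotone (alphaExpansion_le_one ha fun i ↦ hd _)
    _ ≤ cylinderMap a (e 0 + 1) 1 := by
        rw [hcyl_one, hcyl_one]
        exact div_le_div_of_nonneg_left (by positivity) (by positivity)
          (pow_le_pow_right₀ ha.le h)
    _ = cylinderMap a (e 0) 0 := cylinderMap_succ_one ha _
    _ < alphaExpansion a e := by
        rw [alphaExpansion_eq_cylinderMap ha he]
        exact cylinderMap_strictMono ha _ (alphaExpansion_pos ha fun i ↦ he _)

lemma alphaExpansion_lt_of_lex (ha : 1 < a) (k : ℕ) {d e : ℕ → ℕ} (hd : ∀ i, 1 ≤ d i)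
    (he : ∀ i, 1 ≤ e i) (heq : ∀ j < k, d j = e j) (hlt : e k < d k) :
    alphaExpansion a d < alphaExpansion a e := by
  induction k generalizing d e with
  | zero => exact alphaExpansion_lt_of_head_lt ha hd he hlt
  | succ k ih =>
    rw [alphaExpansion_eq_cylinderMap ha hd, alphaExpansion_eq_cylinderMap ha he,
      heq 0 k.succ_pos]
    exact cylinderMap_strictMono ha _ <|
      ih (fun i ↦ hd _) (fun i ↦ he _) (fun j hj ↦ heq (j + 1) (by omega)) hlt

theorem strictAntiOn_alphaExpansion (ha : 1 < a) :
    StrictAntiOn (fun d : Lex (ℕ → ℕ) ↦ alphaExpansion a (ofLex d))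
      {d | ∀ i, 1 ≤ ofLex d i} := by
  rintro d hd e he ⟨k, heq, hlt⟩
  exact alphaExpansion_lt_of_lex ha k he hd (fun j hj ↦ (heq j hj).symm) hlt

theorem exists_alphaExpansion_eq (ha : 1 < a) {x : ℝ} (hx : x ∈ Ioc 0 1) :
    ∃ d : ℕ → ℕ, (∀ i, 1 ≤ d i) ∧ alphaExpansion a d = x := by
  choose n hn y hy hxy using fun z : Ioc (0 : ℝ) 1 ↦ exists_cylinderMap_eq ha z.2
  let shift : Ioc (0 : ℝ) 1 → Ioc (0 : ℝ) 1 := fun z ↦ ⟨y z, hy z⟩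
  let digits : Ioc (0 : ℝ) 1 → ℕ → ℕ := fun z k ↦ n (shift^[k] z)
  have hdigits : ∀ z, ∀ i, 1 ≤ digits z i := fun z i ↦ hn _
  set r := (a - 1) / a
  have hr0 : 0 ≤ r := div_nonneg (by linarith) (by linarith)
  have hclose : ∀ k z, |alphaExpansion a (digits z) - z| ≤ r ^ k := by
    intro k
    induction k with
    | zero =>
      intro z
      have := alphaExpansion_mem_Ioc ha (hdigits z)
      rw [pow_zero, abs_sub_le_iff]
      constructor <;> linarith [this.1, this.2, z.2.1, z.2.2]
    | succ k ih =>
      intro z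
      have hhead : digits z 0 = n z := rfl
      have htail : (fun i ↦ digits z (i + 1)) = digits (shift z) := rfl
      rw [alphaExpansion_eq_cylinderMap ha (hdigits z), hhead, htail, hxy z, cylinderMap_sub,
        abs_mul, abs_of_pos (div_pos (by linarith) (by positivity)), pow_succ']
      gcongr
      · exact div_le_div_of_nonneg_left (by linarith) (by linarith)
          (le_self_pow₀ ha.le (by have := hn z; omega))
      · exact ih (shift z)
  refine ⟨digits ⟨x, hx⟩, hdigits _, ?_⟩
  have hr1 : r < 1 := (div_lt_one (by linarith)).2 (by linarith)
  have := ge_of_tendsto' (tendsto_pow_atTop_nhds_zero_of_lt_one hr0 hr1) (hclose · ⟨x, hx⟩)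
  simpa [sub_eq_zero] using this

end Expansion

theorem MonotoneOn.dimH_graphOn_le_one {f : ℝ → ℝ} {s : Set ℝ} (hf : MonotoneOn f s) :
    dimH (s.graphOn f) ≤ 1 := by
  have hg : AntilipschitzWith 1 fun p : s.graphOn f ↦ p.1.1 + p.1.2 := by
    refine AntilipschitzWith.of_le_mul_dist fun ⟨_, x, hx, rfl⟩ ⟨_, y, hy, rfl⟩ ↦ ?_
    simp only [Subtype.dist_eq, Prod.dist_eq, Real.dist_eq, NNReal.coe_one, one_mul]
    wlog hxy : x ≤ y generalizing x y
    · rw [abs_sub_comm x, abs_sub_comm (f x), abs_sub_comm (x + f x)]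
      exact this y hy x hx (le_of_not_ge hxy)
    have hfxy := hf hx hy hxy
    rw [abs_of_nonpos (by linarith), abs_of_nonpos (by linarith), abs_of_nonpos (by linarith)]
    exact max_le (by linarith) (by linarith)
  calc dimH (s.graphOn f) = dimH (univ : Set (s.graphOn f)) := by
        rw [← (isometry_subtype_coe (s := s.graphOn f)).dimH_image, image_univ, Subtype.range_coe]
    _ ≤ dimH (range fun p : s.graphOn f ↦ p.1.1 + p.1.2) := by
        rw [← image_univ]; exact hg.le_dimH_image _
    _ ≤ dimH (univ : Set ℝ) := dimH_mono (subset_univ _)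
    _ = 1 := Real.dimH_univ

theorem dimH_le_dimH_graphOn (f : ℝ → ℝ) (s : Set ℝ) : dimH s ≤ dimH (s.graphOn f) := by
  simpa only [image_fst_graphOn] using LipschitzWith.prod_fst.dimH_image_le (s.graphOn f)

theorem dimH_Icc_zero_one : dimH (Icc (0 : ℝ) 1) = 1 := by
  rw [Real.dimH_of_nonempty_interior (by simp), Module.finrank_self, Nat.cast_one]

section BaseChange

variable {α β : ℝ} {f : ℝ → ℝ}

theorem monotoneOn_of_baseChange (hα : 1 < α) (hβ : 1 < β) (hf0 : f 0 = 0)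
    (hf : ∀ d : ℕ → ℕ, (∀ i, 1 ≤ d i) → f (alphaExpansion α d) = alphaExpansion β d) :
    MonotoneOn f (Icc 0 1) := by
  intro x hx y hy hxy
  rcases hy.1.eq_or_lt with rfl | hy0
  · rw [le_antisymm hxy hx.1]
  obtain ⟨e, he, rfl⟩ := exists_alphaExpansion_eq hα ⟨hy0, hy.2⟩
  rcases hx.1.eq_or_lt with rfl | hx0
  · rw [hf0, hf e he]; exact (alphaExpansion_pos hβ he).le
  obtain ⟨d, hd, rfl⟩ := exists_alphaExpansion_eq hα ⟨hx0, hx.2⟩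
  rw [hf d hd, hf e he]
  exact ((strictAntiOn_alphaExpansion hβ).le_iff_ge (a := toLex d) (b := toLex e) hd he).2
    (((strictAntiOn_alphaExpansion hα).le_iff_ge (a := toLex d) (b := toLex e) hd he).1 hxy)

variable (α β) in
def expansionPairs : Set (ℝ × ℝ) :=
  (fun d ↦ (alphaExpansion α d, alphaExpansion β d)) '' {d | ∀ i, 1 ≤ d i}

theorem graphOn_Icc_eq_insert_expansionPairs (hα : 1 < α) (hf0 : f 0 = 0)
    (hf : ∀ d : ℕ → ℕ, (∀ i, 1 ≤ d i) → f (alphaExpansion α d) = alphaExpansion β d) :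
    (Icc 0 1).graphOn f = insert (0, 0) (expansionPairs α β) := by
  ext ⟨x, y⟩
  simp only [mem_graphOn, mem_insert_iff, Prod.mk.injEq, expansionPairs, mem_image]
  constructor
  · rintro ⟨hx, rfl⟩
    rcases hx.1.eq_or_lt with rfl | hx0
    · exact .inl ⟨rfl, hf0⟩
    obtain ⟨d, hd, rfl⟩ := exists_alphaExpansion_eq hα ⟨hx0, hx.2⟩
    exact .inr ⟨d, hd, rfl, (hf d hd).symm⟩
  · rintro (⟨rfl, rfl⟩ | ⟨d, hd, rfl, rfl⟩)
    · exact ⟨left_mem_Icc.2 zero_le_one, hf0⟩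
    · exact ⟨Ioc_subset_Icc_self (alphaExpansion_mem_Ioc hα hd), hf d hd⟩

lemma one_le_stream_cons {n : ℕ} (hn : 1 ≤ n) {e : ℕ → ℕ} (he : ∀ i, 1 ≤ e i) :
    ∀ i, 1 ≤ Stream'.cons n e i
  | 0 => hn
  | i + 1 => he i

lemma affG_expansionPair (hα : 1 < α) (hβ : 1 < β) {n : ℕ} (hn : 1 ≤ n) {e : ℕ → ℕ}
    (he : ∀ i, 1 ≤ e i) :
    affG α β n (alphaExpansion α e, alphaExpansion β e) =
      (alphaExpansion α (Stream'.cons n e), alphaExpansion β (Stream'.cons n e)) := by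
  rw [alphaExpansion_eq_cylinderMap hα (one_le_stream_cons hn he),
    alphaExpansion_eq_cylinderMap hβ (one_le_stream_cons hn he)]
  rfl

theorem iUnion_affG_image_insert_expansionPairs (hα : 1 < α) (hβ : 1 < β) :
    ⋃ i : ℕ, affG α β (i + 1) '' insert (0, 0) (expansionPairs α β) = expansionPairs α β := by
  have hone : ∀ i, 1 ≤ (fun _ ↦ 1 : ℕ → ℕ) i := fun _ ↦ le_rfl
  refine Subset.antisymm (iUnion_subset fun i ↦ ?_) ?_
  · rintro _ ⟨p, hp | ⟨e, he, rfl⟩, rfl⟩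
    · have hG : affG α β (i + 1) p =
          affG α β (i + 2) (alphaExpansion α fun _ ↦ 1, alphaExpansion β fun _ ↦ 1) := by
        rw [alphaExpansion_one hα, alphaExpansion_one hβ, hp]
        change (cylinderMap α (i + 1) 0, cylinderMap β (i + 1) 0) =
          (cylinderMap α (i + 2) 1, cylinderMap β (i + 2) 1)
        rw [cylinderMap_succ_one hα, cylinderMap_succ_one hβ]
      rw [hG, affG_expansionPair hα hβ (by omega) hone]
      exact mem_image_of_mem _ (one_le_stream_cons (by omega) hone)
    · rw [affG_expansionPair hα hβ (by omega) he]
      exact mem_image_of_mem _ (one_le_stream_cons (by omega) he)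
  · rintro _ ⟨d, hd, rfl⟩
    refine mem_iUnion.2
      ⟨d 0 - 1, _, mem_insert_of_mem _ (mem_image_of_mem _ fun i ↦ hd (i + 1)), ?_⟩
    rw [Nat.sub_add_cancel (hd 0), affG_expansionPair hα hβ (hd 0) fun i ↦ hd (i + 1)]
    exact congrArg (fun d ↦ (alphaExpansion α d, alphaExpansion β d)) (Stream'.eta d)

end BaseChange

theorem base_change_graph_self_affine_dimH_one (α β : ℝ) (hα : 1 < α) (hβ : 1 < β)
    (f : ℝ → ℝ) (hf0 : f 0 = 0)
    (hf : ∀ d : ℕ → ℕ, (∀ i, 1 ≤ d i) →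
      f (alphaExpansion α d) = alphaExpansion β d)
    (F : Set (ℝ × ℝ)) (hF : F = {p : ℝ × ℝ | ∃ x ∈ Set.Icc (0 : ℝ) 1, p = (x, f x)}) :
    F = (⋃ i : ℕ, affG α β (i + 1) '' F) ∪ {((0 : ℝ), (0 : ℝ))} ∧
    dimH F = 1 := by
  have hgraph : F = (Icc 0 1).graphOn f := by
    ext p
    simp [hF, Set.graphOn, eq_comm]
  rw [hgraph]
  refine ⟨?_, le_antisymm (monotoneOn_of_baseChange hα hβ hf0 hf).dimH_graphOn_le_one ?_⟩
  · rw [graphOn_Icc_eq_insert_expansionPairs hα hf0 hf,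
      iUnion_affG_image_insert_expansionPairs hα hβ, union_singleton]
  · exact dimH_Icc_zero_one ▸ dimH_le_dimH_graphOn f (Icc 0 1)
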